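/- The subshifts X_k are nested along each parity: for every m ≥ 1, X_{2m+1} ⊆ X_{2m-1} and X_{2m+2} ⊆ X_{2m}. -/

import Mathlib

/-- The three-letter alphabet `Σ = {-1, 0, +1}`. -/
inductive Letter : Type
  | neg : Letter
  | zero : Letter
  | pos : Letter
deriving DecidableEq

instance : Fintype Letter :=
  ⟨{Letter.neg, Letter.zero, Letter.pos}, fun x => by cases x <;> simp⟩

/-- `f₀(ω)`: the frequency of the symbol `0` in the finite string `ω`. -/
noncomputable def f0 {n : ℕ} (ω : Fin n → Letter) : ℝ :=
  ((Finset.univ.filter fun i => ω i = Letter.zero).card : ℝ) / n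

/-- The binary entropy `H(t) = -t log t - (1-t) log (1-t)` (with `0 log 0 = 0`). -/
noncomputable def H (t : ℝ) : ℝ := -(t * Real.log t) - (1 - t) * Real.log (1 - t)

/-- `η` occurs as a consecutive substring of `ω` starting at position `s`. -/
def occursAt {p n : ℕ} (η : Fin p → Letter) (ω : Fin n → Letter) (s : ℕ) : Prop :=
  ∃ _h : s + p ≤ n, ∀ i : Fin p, η i = ω ⟨s + i.val, by have := i.isLt; omega⟩

/-- `η` occurs as a consecutive substring of `ω`. -/
def occursIn {p n : ℕ} (η : Fin p → Letter) (ω : Fin n → Letter) : Prop :=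
  ∃ s, occursAt η ω s

/-- The symbol forbidden at level `k`: `-1` for odd `k`, `+1` for even `k`. -/
def bad (k : ℕ) : Letter := if k % 2 = 1 then Letter.neg else Letter.pos

/-- The forbidden sets `F_k` of the construction of Section 4: strings of length `2ℓ_k - 1`
containing the bad symbol, or over the good alphabet with frequency of zeros `≥ r_k`,
or over the good alphabet containing a forbidden string of an earlier level of the same parity. -/
def Forb (ℓ : ℕ → ℕ) (r : ℕ → ℚ) (k : ℕ) : Set (Fin (2 * ℓ k - 1) → Letter) :=
  {ω | ∃ i, ω i = bad k} ∪
    {ω | (∀ i, ω i ≠ bad k) ∧ (r k : ℝ) ≤ f0 ω} ∪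
    {ω | (∀ i, ω i ≠ bad k) ∧
      ∃ k' : Fin k, 1 ≤ k'.val ∧ k'.val % 2 = k % 2 ∧
        ∃ η ∈ Forb ℓ r k'.val, occursIn η ω}
termination_by k
decreasing_by exact k'.isLt

open Classical in
/-- The locally admissible strings of length `2n-1`:  no string from `⋃_{k' ≡ parity, k' ≥ 1} F_{k'}`
occurs as a consecutive substring.  `parity = 1` corresponds to `X₊`, `parity = 0` to `X₋`. -/
noncomputable def Padm (ℓ : ℕ → ℕ) (r : ℕ → ℚ) (parity : ℕ) (n : ℕ) :
    Finset (Fin (2 * n - 1) → Letter) :=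
  Finset.univ.filter fun ω =>
    ∀ k, 1 ≤ k → k % 2 = parity → ∀ η ∈ Forb ℓ r k, ¬ occursIn η ω

/-- `m_k = (2ℓ_k - 1)/(2ℓ_{k-1} - 1)`. -/
def mblk (ℓ : ℕ → ℕ) (k : ℕ) : ℕ := (2 * ℓ k - 1) / (2 * ℓ (k - 1) - 1)

open Classical in
/-- Strings of length `N` which are concatenations of `m` blocks of length `L`,
the blocks at the even positions (`0`-based) taken from `B` and the blocks at odd
positions equal to the constant block `g^L`. -/
noncomputable def CfromB {L : ℕ} (N m : ℕ) (g : Letter) (B : Finset (Fin L → Letter)) :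
    Finset (Fin N → Letter) :=
  Finset.univ.filter fun ω => ∀ j < m,
    if j % 2 = 0 then ∃ η ∈ B, occursAt η ω (j * L)
    else occursAt (fun _ : Fin L => g) ω (j * L)

/-- `B₊,k = P_{X₊,ℓ_k} ∖ {(+1)^{2ℓ_k-1}}`. -/
noncomputable def Bplus (ℓ : ℕ → ℕ) (r : ℕ → ℚ) (k : ℕ) :
    Finset (Fin (2 * ℓ k - 1) → Letter) :=
  Padm ℓ r 1 (ℓ k) \ {fun _ => Letter.pos}

/-- `B₋,k = P_{X₋,ℓ_k} ∖ {(-1)^{2ℓ_k-1}}`. -/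
noncomputable def Bminus (ℓ : ℕ → ℕ) (r : ℕ → ℚ) (k : ℕ) :
    Finset (Fin (2 * ℓ k - 1) → Letter) :=
  Padm ℓ r 0 (ℓ k) \ {fun _ => Letter.neg}

/-- `C₊,k`: alternating concatenations of blocks from `B₊,k-1` and constant `+1` blocks. -/
noncomputable def Cplus (ℓ : ℕ → ℕ) (r : ℕ → ℚ) (k : ℕ) :
    Finset (Fin (2 * ℓ k - 1) → Letter) :=
  CfromB (2 * ℓ k - 1) (mblk ℓ k) Letter.pos (Bplus ℓ r (k - 1))

/-- `C₋,k`: alternating concatenations of blocks from `B₋,k-1` and constant `-1` blocks. -/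
noncomputable def Cminus (ℓ : ℕ → ℕ) (r : ℕ → ℚ) (k : ℕ) :
    Finset (Fin (2 * ℓ k - 1) → Letter) :=
  CfromB (2 * ℓ k - 1) (mblk ℓ k) Letter.neg (Bminus ℓ r (k - 1))

/-- The subshift `X_k ⊆ Σ^ℤ`: bi-infinite sequences in which no string of `F_k` occurs. -/
def Xk (ℓ : ℕ → ℕ) (r : ℕ → ℚ) (k : ℕ) : Set (ℤ → Letter) :=
  {x | ∀ η ∈ Forb ℓ r k, ∀ j : ℤ, ¬ (∀ i : Fin (2 * ℓ k - 1), η i = x (j + (i.val : ℤ)))}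

/-- `X₊ = ⋂_{m ≥ 1} X_{2m-1}`. -/
def Xplus (ℓ : ℕ → ℕ) (r : ℕ → ℚ) : Set (ℤ → Letter) :=
  {x | ∀ m, 1 ≤ m → x ∈ Xk ℓ r (2 * m - 1)}

/-- `X₋ = ⋂_{m ≥ 1} X_{2m}`. -/
def Xminus (ℓ : ℕ → ℕ) (r : ℕ → ℚ) : Set (ℤ → Letter) :=
  {x | ∀ m, 1 ≤ m → x ∈ Xk ℓ r (2 * m)}


/-!
If a word `η ∈ F_k` occurs in `x`, look at the window of length `2ℓ_{k'} - 1` of `x` starting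
where `η` does, for a later level `k'` of the same parity with `ℓ_k ≤ ℓ_{k'}`. Both levels forbid
the same letter, so either the window contains it, or it is over the good alphabet and contains
`η`; in both cases the window lies in `F_{k'}`, so `x ∉ X_{k'}`.
-/

section Nested

variable {ℓ : ℕ → ℕ} {r : ℕ → ℚ}

lemma mem_Forb_of_occursIn {k k' : ℕ} (hk : 1 ≤ k) (hkk' : k < k') (hpar : k % 2 = k' % 2)
    {η : Fin (2 * ℓ k - 1) → Letter} (hη : η ∈ Forb ℓ r k)
    {ω : Fin (2 * ℓ k' - 1) → Letter} (hocc : occursIn η ω) : ω ∈ Forb ℓ r k' := by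
  rw [Forb]
  by_cases hb : ∃ i, ω i = bad k'
  · exact Or.inl (Or.inl hb)
  · exact Or.inr ⟨not_exists.mp hb, ⟨k, hkk'⟩, hk, hpar, η, hη, hocc⟩

lemma occursIn_window {p n : ℕ} (hpn : p ≤ n) {η : Fin p → Letter} {x : ℤ → Letter} {j : ℤ}
    (hocc : ∀ i : Fin p, η i = x (j + (i.val : ℤ))) :
    occursIn η (fun i : Fin n => x (j + (i.val : ℤ))) :=
  ⟨0, by omega, fun i => by simpa using hocc i⟩

lemma Xk_subset_Xk {k k' : ℕ} (hk : 1 ≤ k) (hkk' : k < k') (hpar : k % 2 = k' % 2)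
    (hℓ : ℓ k ≤ ℓ k') : Xk ℓ r k' ⊆ Xk ℓ r k := by
  intro x hx η hη j hocc
  have hwindow := mem_Forb_of_occursIn hk hkk' hpar hη
    (occursIn_window (n := 2 * ℓ k' - 1) (by omega) hocc)
  exact hx _ hwindow j fun _ => rfl

end Nested

theorem Xk_nested_general (ℓ : ℕ → ℕ) (r : ℕ → ℚ)
    (hlmono : ∀ k, 1 ≤ k → ℓ k < ℓ (k + 1)) :
    ∀ m, 1 ≤ m →
      Xk ℓ r (2 * m + 1) ⊆ Xk ℓ r (2 * m - 1) ∧ Xk ℓ r (2 * m + 2) ⊆ Xk ℓ r (2 * m) := by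
  intro m hm
  have hℓ_odd : ℓ (2 * m - 1) < ℓ (2 * m) := by
    simpa [show 2 * m - 1 + 1 = 2 * m by omega] using hlmono (2 * m - 1) (by omega)
  have hℓ_even : ℓ (2 * m) < ℓ (2 * m + 1) := hlmono (2 * m) (by omega)
  have hℓ_next : ℓ (2 * m + 1) < ℓ (2 * m + 2) := hlmono (2 * m + 1) (by omega)
  exact ⟨Xk_subset_Xk (by omega) (by omega) (by omega) (by omega),
    Xk_subset_Xk (by omega) (by omega) (by omega) (by omega)⟩

theorem Xk_nested (ℓ : ℕ → ℕ) (r : ℕ → ℚ)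
    (hl1 : ℓ 1 = 4) (hlmono : ∀ k, 1 ≤ k → ℓ k < ℓ (k + 1))
    (hr1 : r 1 = 1 / 2) (hrpos : ∀ k, 1 ≤ k → 0 < r k) (hrhalf : ∀ k, 1 ≤ k → r k ≤ 1 / 2) :
    ∀ m, 1 ≤ m →
      Xk ℓ r (2 * m + 1) ⊆ Xk ℓ r (2 * m - 1) ∧ Xk ℓ r (2 * m + 2) ⊆ Xk ℓ r (2 * m) :=
  Xk_nested_general ℓ r hlmono
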